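/- Let H be a Hopf algebra over ℂ, u an invertible element of H with S²(x) = u x u⁻¹ for all x ∈ H, and δ ∈ H a group-like element (Δδ = δ ⊗ δ, ε(δ) = 1), and assume the element θ = δu is central in H. Then the twisted antipode S̃ defined by S̃(x) = δ · S(x) is an involution: S̃(S̃(x)) = x for all x ∈ H. -/

import Mathlib

noncomputable section

open Coalgebra HopfAlgebra TensorProduct LinearMap

variable {H : Type} [Ring H] [HopfAlgebra ℂ H]

lemma grouplike_mul_antipode (δ : H) (hc : comul (R := ℂ) δ = δ ⊗ₜ[ℂ] δ)
    (he : counit (R := ℂ) δ = 1) : δ * antipode (R := ℂ) δ = 1 := by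
  have := mul_antipode_lTensor_comul_apply (R := ℂ) δ
  rw [hc] at this
  simpa [he] using this

lemma sum_smul_counit_left {ι : Type*} (a : H) (r : Coalgebra.Repr ℂ a ι) :
    ∑ i ∈ r.index, counit (R := ℂ) (r.right i) • r.left i = a := by
  have h := sum_tmul_counit_eq (R := ℂ) r
  have h2 := congrArg (TensorProduct.rid ℂ H) h
  rw [map_sum] at h2
  simp only [TensorProduct.rid_tmul, one_smul] at h2
  exact h2

lemma sum_smul_counit_right {ι : Type*} (a : H) (r : Coalgebra.Repr ℂ a ι) :
    ∑ i ∈ r.index, counit (R := ℂ) (r.left i) • r.right i = a := by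
  have h := sum_counit_tmul_eq (R := ℂ) r
  have h2 := congrArg (TensorProduct.lid ℂ H) h
  rw [map_sum] at h2
  simp only [TensorProduct.lid_tmul, one_smul] at h2
  exact h2

/-- Repr of `δ * c` obtained from a repr of `c`, for group-like `δ`. -/
def Coalgebra.Repr.grouplikeMul (δ : H) (hc : comul (R := ℂ) δ = δ ⊗ₜ[ℂ] δ)
    {ι : Type*} {c : H} (r : Coalgebra.Repr ℂ c ι) : Coalgebra.Repr ℂ (δ * c) ι where
  index := r.index
  left i := δ * r.left i
  right i := δ * r.right i
  eq := by
    rw [Bialgebra.comul_mul, hc, ← r.eq, Finset.mul_sum]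
    simp [Algebra.TensorProduct.tmul_mul_tmul]

lemma sum_antipode_grouplike (δ : H) (hc : comul (R := ℂ) δ = δ ⊗ₜ[ℂ] δ)
    (he : counit (R := ℂ) δ = 1) {ι : Type*} {c : H} (r : Coalgebra.Repr ℂ c ι) :
    ∑ i ∈ r.index, antipode (R := ℂ) (δ * r.left i) * (δ * r.right i)
      = counit (R := ℂ) c • 1 := by
  have := sum_antipode_mul_eq_smul (R := ℂ) (r.grouplikeMul δ hc)
  simpa [Coalgebra.Repr.grouplikeMul, Bialgebra.counit_mul, he] using this

lemma antipode_grouplike_mul (δ : H) (hc : comul (R := ℂ) δ = δ ⊗ₜ[ℂ] δ)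
    (he : counit (R := ℂ) δ = 1) (a : H) :
    antipode (R := ℂ) (δ * a) = antipode (R := ℂ) a * antipode (R := ℂ) δ := by
  classical
  set S : H →ₗ[ℂ] H := antipode (R := ℂ) with hS
  set r := ℛ ℂ a with hr
  set a₁ : (i : H × H) → Coalgebra.Repr ℂ (r.left i) (H × H) := fun i => ℛ ℂ (r.left i)
  set a₂ : (i : H × H) → Coalgebra.Repr ℂ (r.right i) (H × H) := fun i => ℛ ℂ (r.right i)
  have key := Coalgebra.sum_tmul_tmul_eq r a₁ a₂
  set ψ : H ⊗[ℂ] (H ⊗[ℂ] H) →ₗ[ℂ] H :=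
    mul' ℂ H ∘ₗ TensorProduct.map (S ∘ₗ mulLeft ℂ δ)
      (mul' ℂ H ∘ₗ TensorProduct.map (mulLeft ℂ δ) (mulRight ℂ (S δ) ∘ₗ S)) with hψ
  have hψapp : ∀ x y z : H, ψ (x ⊗ₜ[ℂ] (y ⊗ₜ[ℂ] z))
      = S (δ * x) * ((δ * y) * (S z * S δ)) := by
    intro x y z; simp [hψ]
  have := congrArg ψ key
  rw [map_sum, map_sum] at this
  -- Evaluate LHS of `this`
  have hL : ∑ i ∈ r.index, ψ (∑ j ∈ (a₁ i).index,
        (a₁ i).left j ⊗ₜ[ℂ] ((a₁ i).right j ⊗ₜ[ℂ] r.right i))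
      = S a * S δ := by
    have step : ∀ i ∈ r.index, ψ (∑ j ∈ (a₁ i).index,
        (a₁ i).left j ⊗ₜ[ℂ] ((a₁ i).right j ⊗ₜ[ℂ] r.right i))
        = counit (R := ℂ) (r.left i) • (S (r.right i) * S δ) := by
      intro i _
      rw [map_sum]
      calc ∑ j ∈ (a₁ i).index, ψ ((a₁ i).left j ⊗ₜ[ℂ] ((a₁ i).right j ⊗ₜ[ℂ] r.right i))
          = (∑ j ∈ (a₁ i).index, S (δ * (a₁ i).left j) * (δ * (a₁ i).right j))
              * (S (r.right i) * S δ) := by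
            rw [Finset.sum_mul]
            exact Finset.sum_congr rfl fun j _ => by rw [hψapp]; simp only [mul_assoc]
        _ = counit (R := ℂ) (r.left i) • (S (r.right i) * S δ) := by
            rw [sum_antipode_grouplike δ hc he (a₁ i), smul_mul_assoc, one_mul]
    rw [Finset.sum_congr rfl step]
    have h2 : ∑ i ∈ r.index, counit (R := ℂ) (r.left i) • (S (r.right i) * S δ)
        = (∑ i ∈ r.index, S (counit (R := ℂ) (r.left i) • r.right i)) * S δ := by
      rw [Finset.sum_mul]
      exact Finset.sum_congr rfl fun i _ => by rw [map_smul, smul_mul_assoc]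
    rw [h2, ← map_sum, sum_smul_counit_right a r]
  -- Evaluate RHS of `this`
  have hR : ∑ i ∈ r.index, ψ (∑ j ∈ (a₂ i).index,
        r.left i ⊗ₜ[ℂ] ((a₂ i).left j ⊗ₜ[ℂ] (a₂ i).right j))
      = S (δ * a) := by
    have step : ∀ i ∈ r.index, ψ (∑ j ∈ (a₂ i).index,
        r.left i ⊗ₜ[ℂ] ((a₂ i).left j ⊗ₜ[ℂ] (a₂ i).right j))
        = counit (R := ℂ) (r.right i) • S (δ * r.left i) := by
      intro i _
      rw [map_sum]
      calc ∑ j ∈ (a₂ i).index, ψ (r.left i ⊗ₜ[ℂ] ((a₂ i).left j ⊗ₜ[ℂ] (a₂ i).right j))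
          = S (δ * r.left i) * (δ * ((∑ j ∈ (a₂ i).index,
              (a₂ i).left j * S ((a₂ i).right j)) * S δ)) := by
            rw [Finset.sum_mul, Finset.mul_sum, Finset.mul_sum]
            exact Finset.sum_congr rfl fun j _ => by
              rw [hψapp]; simp only [mul_assoc]
        _ = counit (R := ℂ) (r.right i) • S (δ * r.left i) := by
            rw [sum_mul_antipode_eq_smul (R := ℂ) (a₂ i), smul_mul_assoc, one_mul,
              mul_smul_comm, grouplike_mul_antipode δ hc he, mul_smul_comm, mul_one]
    rw [Finset.sum_congr rfl step]
    have h2 : ∑ i ∈ r.index, counit (R := ℂ) (r.right i) • S (δ * r.left i)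
        = S (δ * ∑ i ∈ r.index, counit (R := ℂ) (r.right i) • r.left i) := by
      rw [Finset.mul_sum, map_sum]
      exact Finset.sum_congr rfl fun i _ => by rw [mul_smul_comm, map_smul]
    rw [h2, sum_smul_counit_left a r]
  rw [← hL, ← hR]; exact this.symm

theorem ribbon_twisted_antipode_involutive
    (H : Type) [Ring H] [HopfAlgebra ℂ H] (u : Hˣ)
    (hu : ∀ x : H, HopfAlgebra.antipode (R := ℂ) (HopfAlgebra.antipode (R := ℂ) x)
      = (u : H) * x * (↑u⁻¹ : H))
    (δ : H) (hδ_comul : Coalgebra.comul (R := ℂ) δ = δ ⊗ₜ[ℂ] δ)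
    (hδ_counit : Coalgebra.counit (R := ℂ) δ = (1 : ℂ))
    (hθ_central : ∀ x : H, (δ * (u : H)) * x = x * (δ * (u : H))) :
    ∀ x : H,
      δ * HopfAlgebra.antipode (R := ℂ) (δ * HopfAlgebra.antipode (R := ℂ) x) = x := by
  intro x
  rw [antipode_grouplike_mul δ hδ_comul hδ_counit, hu x]
  have h1 : δ * antipode (R := ℂ) δ = 1 := grouplike_mul_antipode δ hδ_comul hδ_counit
  calc δ * (↑u * x * ↑u⁻¹ * antipode (R := ℂ) δ)
      = (δ * ↑u * x) * (↑u⁻¹ * antipode (R := ℂ) δ) := by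
        simp only [mul_assoc]
    _ = (x * (δ * ↑u)) * (↑u⁻¹ * antipode (R := ℂ) δ) := by rw [← mul_assoc, hθ_central]; simp only [mul_assoc]
    _ = x := by
        simp only [mul_assoc, Units.mul_inv_cancel_left]
        rw [h1, mul_one]
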